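/- (Matrix S-lemma.) Let M, N ∈ S^{q+r}. If there exists a real α ≥ 0 such that M − αN is positive semidefinite, then Z_r(N) ⊆ Z_r(M). Conversely, if in addition N ∈ Π_{q,r} and N has at least one positive eigenvalue, then Z_r(N) ⊆ Z_r(M) if and only if there exists a real α ≥ 0 such that M − αN is positive semidefinite. -/

import Mathlib

/-!
The forward implication holds because `Π ↦ [I; Z]ᵀ Π [I; Z]` is linear and preserves positive
semidefiniteness. For the converse, write `ξ = (x, z)` and `C = -N₂₂^† N₂₁`. For `N ∈ Π_{q,r}` the
generalized Schur complement gives the factorization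
`ξᵀ N ξ = xᵀ (N|N₂₂) x + (z - C x)ᵀ N₂₂ (z - C x)`,
and from it (with Cauchy–Schwarz for `N|N₂₂`) every `ξ` with `ξᵀ N ξ ≥ 0` and `x ≠ 0` can be written
`(x, Z x)` for a rank-one perturbation `Z` of `C` lying in `Z_r(N)`; the case `x = 0` follows by
continuity. Hence `Z_r(N) ⊆ Z_r(M)` gives `ξᵀ N ξ ≥ 0 → ξᵀ M ξ ≥ 0` for all vectors `ξ`, and the
S-lemma turns this into `M - α N ⪰ 0`, a positive eigenvector of `N` being its Slater point. The
S-lemma itself rests on Dines' theorem that the joint range `{(Q₁ v, Q₂ v)}` of two real quadratic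
forms is a convex cone; `α` can then be taken to be the infimum of the slopes `Q₂ v / Q₁ v` over
`Q₁ v > 0`.
-/

open Matrix
open scoped Classical

/-- The Moore–Penrose pseudoinverse of a real matrix, defined via its four
characterizing Penrose conditions (which determine it uniquely). -/
noncomputable def pinv {m n : ℕ} (A : Matrix (Fin m) (Fin n) ℝ) : Matrix (Fin n) (Fin m) ℝ :=
  if h : ∃ B : Matrix (Fin n) (Fin m) ℝ,
      A * B * A = A ∧ B * A * B = B ∧ (A * B)ᵀ = A * B ∧ (B * A)ᵀ = B * A
  then h.choose else 0

/-- The unique positive semidefinite square root of a positive semidefinite matrix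
(defined by its characterizing property, which determines it uniquely). -/
noncomputable def msqrt {n : ℕ} (A : Matrix (Fin n) (Fin n) ℝ) : Matrix (Fin n) (Fin n) ℝ :=
  if h : ∃ B : Matrix (Fin n) (Fin n) ℝ, B.PosSemidef ∧ B * B = A then h.choose else 0

/-- The quadratic matrix expression `[I; Z]ᵀ Π [I; Z]`. -/
noncomputable def qmi {q r : ℕ} (P : Matrix (Fin q ⊕ Fin r) (Fin q ⊕ Fin r) ℝ)
    (Z : Matrix (Fin r) (Fin q) ℝ) : Matrix (Fin q) (Fin q) ℝ :=
  (fromRows (1 : Matrix (Fin q) (Fin q) ℝ) Z)ᵀ * P * fromRows 1 Z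

/-- The solution set `Z_r(Π)` of the nonstrict QMI. -/
def ZrSet {q r : ℕ} (P : Matrix (Fin q ⊕ Fin r) (Fin q ⊕ Fin r) ℝ) :
    Set (Matrix (Fin r) (Fin q) ℝ) := {Z | (qmi P Z).PosSemidef}

/-- The solution set `Z_r⁺(Π)` of the strict QMI. -/
def ZrPlusSet {q r : ℕ} (P : Matrix (Fin q ⊕ Fin r) (Fin q ⊕ Fin r) ℝ) :
    Set (Matrix (Fin r) (Fin q) ℝ) := {Z | (qmi P Z).PosDef}

/-- The solution set `Z_r⁰(Π)` of the quadratic matrix equality. -/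
def ZrZeroSet {q r : ℕ} (P : Matrix (Fin q ⊕ Fin r) (Fin q ⊕ Fin r) ℝ) :
    Set (Matrix (Fin r) (Fin q) ℝ) := {Z | qmi P Z = 0}

/-- Generalized Schur complement `Π|Π₂₂ = Π₁₁ − Π₁₂ Π₂₂^† Π₂₁`. -/
noncomputable def schurC {q r : ℕ} (P : Matrix (Fin q ⊕ Fin r) (Fin q ⊕ Fin r) ℝ) :
    Matrix (Fin q) (Fin q) ℝ :=
  P.toBlocks₁₁ - P.toBlocks₁₂ * pinv P.toBlocks₂₂ * P.toBlocks₂₁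

/-- Membership in the class `Π_{q,r}`: symmetric, `Π₂₂ ⪯ 0`, `Π|Π₂₂ ⪰ 0`,
and `ker Π₂₂ ⊆ ker Π₁₂`. -/
def memPi {q r : ℕ} (P : Matrix (Fin q ⊕ Fin r) (Fin q ⊕ Fin r) ℝ) : Prop :=
  P.IsSymm ∧ (-P.toBlocks₂₂).PosSemidef ∧ (schurC P).PosSemidef ∧
    ∀ x : Fin r → ℝ, P.toBlocks₂₂ *ᵥ x = 0 → P.toBlocks₁₂ *ᵥ x = 0

open Real

lemma Prod.exists_eq_smul_of_mul_eq_mul {u p : ℝ × ℝ} (hp : p ≠ 0) (h : u.1 * p.2 = u.2 * p.1) :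
    ∃ l : ℝ, u = l • p := by
  by_cases hp₁ : p.1 = 0
  · have hp₂ : p.2 ≠ 0 := fun h₂ => hp (Prod.ext hp₁ h₂)
    refine ⟨u.2 / p.2, Prod.ext ?_ ?_⟩ <;> simp only [Prod.smul_fst, Prod.smul_snd, smul_eq_mul]
    · field_simp
      simpa [hp₁] using h
    · field_simp
  · refine ⟨u.1 / p.1, Prod.ext ?_ ?_⟩ <;> simp only [Prod.smul_fst, Prod.smul_snd, smul_eq_mul]
    · field_simp
    · field_simp
      linarith

namespace QuadraticMap

variable {V : Type*} [AddCommGroup V] [Module ℝ V] (Q Q₁ Q₂ : QuadraticForm ℝ V)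

lemma map_smul_add_smul (a b : ℝ) (x y : V) :
    Q (a • x + b • y) = a ^ 2 * Q x + a * b * polar Q x y + b ^ 2 * Q y := by
  rw [QuadraticMap.map_add (⇑Q), QuadraticMap.map_smul, QuadraticMap.map_smul, polar_smul_left,
    polar_smul_right, smul_eq_mul, smul_eq_mul, smul_eq_mul, smul_eq_mul]
  ring

lemma map_rotate_add_map_rotate (t : ℝ) (x y : V) :
    Q (cos t • x + sin t • y) + Q ((-sin t) • x + cos t • y) = Q x + Q y := by
  rw [map_smul_add_smul, map_smul_add_smul]
  linear_combination (Q x + Q y) * sin_sq_add_cos_sq t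

lemma exists_pair_eq_smul {c : ℝ} (hc : 0 ≤ c) (v : V) :
    ∃ w, (Q₁ w, Q₂ w) = c • (Q₁ v, Q₂ v) :=
  ⟨√c • v, by simp [QuadraticMap.map_smul, mul_self_sqrt hc]⟩

/-- Dines' theorem. As `t` goes from `0` to `π / 2`, the image of `cos t • x + sin t • y` moves from
`(Q₁ x, Q₂ x)` to `(Q₁ y, Q₂ y)`, so for some `t` it is parallel to their sum `p`; the image of
`-sin t • x + cos t • y` is `p` minus it, so one of the two is a positive multiple of `p`. -/
lemma exists_pair_eq_add (x y : V) :
    ∃ w, (Q₁ w, Q₂ w) = (Q₁ x, Q₂ x) + (Q₁ y, Q₂ y) := by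
  set p := (Q₁ x, Q₂ x) + (Q₁ y, Q₂ y) with hp_def
  rcases eq_or_ne p 0 with hp | hp
  · exact ⟨0, by simp [hp]⟩
  set F : ℝ → ℝ × ℝ := fun t => (Q₁ (cos t • x + sin t • y), Q₂ (cos t • x + sin t • y))
  set G : ℝ → ℝ × ℝ := fun t => (Q₁ ((-sin t) • x + cos t • y), Q₂ ((-sin t) • x + cos t • y))
  have hFG : ∀ t, G t = p - F t := fun t => by
    simp only [F, G, hp_def, Prod.mk_add_mk, Prod.mk_sub_mk, ← map_rotate_add_map_rotate _ t x y]
    ring_nf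
  set h : ℝ → ℝ := fun t => (F t).1 * p.2 - (F t).2 * p.1
  have hcont : Continuous h := by
    simp only [h, F, map_smul_add_smul]
    fun_prop
  have hsymm : h (π / 2) = -h 0 := by
    simp only [h, F, hp_def, cos_pi_div_two, sin_pi_div_two, cos_zero, sin_zero, zero_smul,
      one_smul, zero_add, add_zero, Prod.mk_add_mk]
    ring
  obtain ⟨t, -, ht⟩ : ∃ t ∈ Set.uIcc 0 (π / 2), h t = 0 :=
    intermediate_value_uIcc hcont.continuousOn (by rw [hsymm, Set.mem_uIcc]; grind)
  obtain ⟨l, hl⟩ := Prod.exists_eq_smul_of_mul_eq_mul hp (sub_eq_zero.mp ht)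
  rcases lt_or_ge 0 l with hl₀ | hl₀
  · obtain ⟨w, hw⟩ := exists_pair_eq_smul Q₁ Q₂ (inv_nonneg.mpr hl₀.le) (cos t • x + sin t • y)
    refine ⟨w, ?_⟩
    rw [hw]
    change l⁻¹ • F t = p
    rw [hl, smul_smul, inv_mul_cancel₀ hl₀.ne', one_smul]
  · have hl₁ : 0 < 1 - l := by linarith
    obtain ⟨w, hw⟩ := exists_pair_eq_smul Q₁ Q₂ (inv_nonneg.mpr hl₁.le) ((-sin t) • x + cos t • y)
    refine ⟨w, ?_⟩
    rw [hw]
    change (1 - l)⁻¹ • G t = p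
    rw [hFG, hl, show p - l • p = (1 - l) • p by rw [sub_smul, one_smul], smul_smul,
      inv_mul_cancel₀ hl₁.ne', one_smul]

def jointRange : ConvexCone ℝ (ℝ × ℝ) where
  carrier := Set.range fun v => (Q₁ v, Q₂ v)
  smul_mem' := by
    rintro c hc _ ⟨v, rfl⟩
    exact exists_pair_eq_smul Q₁ Q₂ hc.le v
  add_mem' := by
    rintro _ ⟨x, rfl⟩ _ ⟨y, rfl⟩
    exact exists_pair_eq_add Q₁ Q₂ x y

end QuadraticMap

theorem ConvexCone.exists_nonneg_mul_fst_le_snd (K : ConvexCone ℝ (ℝ × ℝ))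
    (hK : ∀ p ∈ K, 0 ≤ p.1 → 0 ≤ p.2) (hpos : ∃ p ∈ K, 0 < p.1) :
    ∃ α : ℝ, 0 ≤ α ∧ ∀ p ∈ K, α * p.1 ≤ p.2 := by
  set S := (fun p : ℝ × ℝ => p.2 / p.1) '' {p | p ∈ K ∧ 0 < p.1}
  have hS : S.Nonempty := let ⟨p, hpK, hp⟩ := hpos; ⟨_, p, ⟨hpK, hp⟩, rfl⟩
  have hS₀ : ∀ a ∈ S, 0 ≤ a := by
    rintro _ ⟨p, ⟨hpK, hp⟩, rfl⟩
    exact div_nonneg (hK p hpK hp.le) hp.le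
  -- A point with `p.1 < 0` and one with `q.1 > 0` combine to a point of `K` on the second axis.
  have hneg : ∀ p ∈ K, p.1 < 0 → ∀ a ∈ S, p.2 / p.1 ≤ a := by
    rintro p hpK hp _ ⟨q, ⟨hqK, hq⟩, rfl⟩
    have hw := hK _ (K.add_mem (K.smul_mem hq hpK) (K.smul_mem (neg_pos.mpr hp) hqK))
      (by simp [mul_comm])
    simp only [Prod.snd_add, Prod.smul_snd, smul_eq_mul] at hw
    rw [div_le_iff_of_neg hp, div_mul_eq_mul_div, div_le_iff₀ hq]
    linarith
  refine ⟨sInf S, le_csInf hS hS₀, fun p hpK => ?_⟩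
  rcases lt_trichotomy p.1 0 with hp | hp | hp
  · rw [← div_le_iff_of_neg hp]
    exact le_csInf hS (hneg p hpK hp)
  · simp [hp, hK p hpK hp.ge]
  · rw [← le_div_iff₀ hp]
    exact csInf_le ⟨0, hS₀⟩ ⟨p, ⟨hpK, hp⟩, rfl⟩

theorem QuadraticMap.s_lemma {V : Type*} [AddCommGroup V] [Module ℝ V]
    (Q₁ Q₂ : QuadraticForm ℝ V) (h : ∀ v, 0 ≤ Q₁ v → 0 ≤ Q₂ v) (hQ₁ : ∃ v, 0 < Q₁ v) :
    ∃ α : ℝ, 0 ≤ α ∧ ∀ v, α * Q₁ v ≤ Q₂ v := by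
  obtain ⟨α, hα, hle⟩ := (jointRange Q₁ Q₂).exists_nonneg_mul_fst_le_snd
    (by rintro _ ⟨v, rfl⟩; exact h v) (let ⟨v, hv⟩ := hQ₁; ⟨_, ⟨v, rfl⟩, hv⟩)
  exact ⟨α, hα, fun v => hle _ ⟨v, rfl⟩⟩

namespace Matrix

variable {m n : Type*} [Fintype m] [Fintype n]

def IsPseudoinverse (A : Matrix m n ℝ) (B : Matrix n m ℝ) : Prop :=
  A * B * A = A ∧ B * A * B = B ∧ (A * B)ᵀ = A * B ∧ (B * A)ᵀ = B * A

lemma isPseudoinverse_diagonal [DecidableEq n] (d : n → ℝ) :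
    IsPseudoinverse (diagonal d) (diagonal d⁻¹) := by
  simp only [IsPseudoinverse, diagonal_mul_diagonal, diagonal_transpose, and_true]
  constructor <;> congr 1 <;> ext i
  · exact mul_inv_mul_cancel (d i)
  · simpa using mul_inv_mul_cancel (d i)⁻¹

lemma IsPseudoinverse.conj [DecidableEq n] {A B : Matrix n n ℝ} (h : IsPseudoinverse A B)
    {U : Matrix n n ℝ} (hU : Uᵀ * U = 1) : IsPseudoinverse (U * A * Uᵀ) (U * B * Uᵀ) := by
  have hmul : ∀ X Y : Matrix n n ℝ, U * X * Uᵀ * (U * Y * Uᵀ) = U * (X * Y) * Uᵀ := by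
    intro X Y
    simp only [Matrix.mul_assoc, ← Matrix.mul_assoc Uᵀ U, hU, Matrix.one_mul]
  have htr : ∀ X : Matrix n n ℝ, (U * X * Uᵀ)ᵀ = U * Xᵀ * Uᵀ := by
    intro X
    simp [Matrix.mul_assoc]
  obtain ⟨h₁, h₂, h₃, h₄⟩ := h
  exact ⟨by rw [hmul, hmul, h₁], by rw [hmul, hmul, h₂], by rw [hmul, htr, h₃],
    by rw [hmul, htr, h₄]⟩

lemma exists_isPseudoinverse_of_isSymm [DecidableEq n] {A : Matrix n n ℝ} (hA : A.IsSymm) :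
    ∃ B, IsPseudoinverse A B := by
  have hH : A.IsHermitian := by simpa [IsHermitian] using hA.eq
  set U : Matrix n n ℝ := (hH.eigenvectorUnitary : Matrix n n ℝ)
  have hU : Uᵀ * U = 1 := by
    simpa [star_eq_conjTranspose] using Matrix.mem_unitaryGroup_iff'.mp hH.eigenvectorUnitary.2
  have hspec : A = U * diagonal hH.eigenvalues * Uᵀ := by
    simpa [Unitary.conjStarAlgAut_apply, star_eq_conjTranspose] using hH.spectral_theorem
  exact ⟨_, hspec ▸ (isPseudoinverse_diagonal _).conj hU⟩

lemma IsPseudoinverse.mul_mul_cancel {A B : Matrix n n ℝ} (h : IsPseudoinverse A B)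
    (hA : A.IsSymm) {C : Matrix n m ℝ} (hC : ∀ x, A *ᵥ x = 0 → Cᵀ *ᵥ x = 0) :
    A * B * C = C := by
  obtain ⟨h₁, -, h₃, -⟩ := h
  -- `E` has columns in `ker A ⊆ ker Cᵀ` and is killed by the symmetric projection `A * B`.
  have hAAB : A * A * B = A := by
    calc A * A * B = Aᵀ * (A * B)ᵀ := by rw [hA.eq, h₃, Matrix.mul_assoc]
      _ = A := by rw [← transpose_mul, h₁, hA.eq]
  set E := C - A * B * C
  have hAE : A * E = 0 := by
    rw [Matrix.mul_sub, ← Matrix.mul_assoc, ← Matrix.mul_assoc, hAAB, sub_self]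
  have hCE : Cᵀ * E = 0 := by
    refine ext_of_mulVec_single fun i => ?_
    rw [← mulVec_mulVec, hC _ (by rw [mulVec_mulVec, hAE, zero_mulVec]), zero_mulVec]
  have hABE : A * B * E = 0 := by
    rw [Matrix.mul_sub, ← Matrix.mul_assoc, ← Matrix.mul_assoc (A * B) A B, h₁, sub_self]
  have hEE : Eᴴ * E = 0 := by
    rw [conjTranspose_eq_transpose_of_trivial, transpose_sub, Matrix.sub_mul, hCE, transpose_mul,
      h₃, Matrix.mul_assoc, hABE, Matrix.mul_zero, sub_zero]
  exact (sub_eq_zero.mp (conjTranspose_mul_self_eq_zero.mp hEE)).symm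

lemma dotProduct_transpose_mul_mul_mulVec (A : Matrix m m ℝ) (B : Matrix m n ℝ) (x : n → ℝ) :
    x ⬝ᵥ (Bᵀ * A * B) *ᵥ x = (B *ᵥ x) ⬝ᵥ A *ᵥ (B *ᵥ x) := by
  rw [← mulVec_mulVec, ← mulVec_mulVec, dotProduct_mulVec, vecMul_transpose]

lemma PosSemidef.exists_dotProduct_eq_one_and_le {S : Matrix n n ℝ} (hS : S.PosSemidef)
    {x : n → ℝ} (hx : x ≠ 0) {c : ℝ} (hc : 0 ≤ c) (hcx : c ≤ x ⬝ᵥ S *ᵥ x) :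
    ∃ s, s ⬝ᵥ x = 1 ∧ ∀ u, c * (s ⬝ᵥ u) ^ 2 ≤ u ⬝ᵥ S *ᵥ u := by
  have hnonneg : ∀ u, 0 ≤ u ⬝ᵥ S *ᵥ u := fun u => by simpa using hS.dotProduct_mulVec_nonneg u
  rcases hc.eq_or_lt with rfl | hc
  · refine ⟨(x ⬝ᵥ x)⁻¹ • x, ?_, fun u => by simpa using hnonneg u⟩
    rw [smul_dotProduct, smul_eq_mul, inv_mul_cancel₀ (dotProduct_self_eq_zero.not.mpr hx)]
  set g := x ⬝ᵥ S *ᵥ x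
  have hg : 0 < g := hc.trans_le hcx
  have hsymm : ∀ u, (S *ᵥ x) ⬝ᵥ u = x ⬝ᵥ S *ᵥ u := fun u => by
    rw [dotProduct_mulVec, ← mulVec_transpose, ← conjTranspose_eq_transpose_of_trivial,
      hS.isHermitian.eq]
  have hCS : ∀ u, (x ⬝ᵥ S *ᵥ u) ^ 2 ≤ g * (u ⬝ᵥ S *ᵥ u) := fun u => by
    classical
    have := LinearMap.BilinForm.apply_mul_apply_le_of_forall_zero_le (toLinearMap₂' ℝ S)
      (fun v => by rw [toLinearMap₂'_apply']; exact hnonneg v) x u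
    rwa [toLinearMap₂'_apply', toLinearMap₂'_apply', toLinearMap₂'_apply', toLinearMap₂'_apply',
      dotProduct_comm u, hsymm, ← sq] at this
  refine ⟨g⁻¹ • S *ᵥ x, ?_, fun u => ?_⟩
  · rw [smul_dotProduct, hsymm, smul_eq_mul, inv_mul_cancel₀ hg.ne']
  · rw [smul_dotProduct, hsymm, smul_eq_mul]
    calc c * (g⁻¹ * (x ⬝ᵥ S *ᵥ u)) ^ 2 ≤ g * (g⁻¹ * (x ⬝ᵥ S *ᵥ u)) ^ 2 := by gcongr
      _ = (x ⬝ᵥ S *ᵥ u) ^ 2 / g := by field_simp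
      _ ≤ u ⬝ᵥ S *ᵥ u := by rw [div_le_iff₀ hg, mul_comm]; exact hCS u

lemma exists_dotProduct_mulVec_pos_of_hasEigenvalue {N : Matrix n n ℝ} {μ : ℝ} (hμ : 0 < μ)
    (h : Module.End.HasEigenvalue N.mulVecLin μ) : ∃ ξ, 0 < ξ ⬝ᵥ N *ᵥ ξ := by
  obtain ⟨v, hv⟩ := h.exists_hasEigenvector
  refine ⟨v, ?_⟩
  rw [← mulVecLin_apply, hv.apply_eq_smul, dotProduct_smul, smul_eq_mul]
  exact mul_pos hμ (by simpa using dotProduct_star_self_pos_iff.mpr hv.2)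

lemma toQuadraticForm'_apply [DecidableEq n] (A : Matrix n n ℝ)
    (ξ : n → ℝ) : A.toQuadraticForm' ξ = ξ ⬝ᵥ A *ᵥ ξ := by
  simp [toQuadraticForm', toLinearMap₂'_apply']

end Matrix

lemma isPseudoinverse_pinv {k : ℕ} {A : Matrix (Fin k) (Fin k) ℝ} (hA : A.IsSymm) :
    A.IsPseudoinverse (pinv A) := by
  unfold pinv
  split_ifs with h
  · exact h.choose_spec
  · exact absurd (Matrix.exists_isPseudoinverse_of_isSymm hA) h

section Blocks

variable {q r : ℕ}

-- `qmi` is elaborated with the multiplication of `CStarMatrix`, on which the `Matrix` lemmas do not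
-- fire; this restates it with `Matrix` multiplication.
lemma qmi_def (P : Matrix (Fin q ⊕ Fin r) (Fin q ⊕ Fin r) ℝ) (Z : Matrix (Fin r) (Fin q) ℝ) :
    qmi P Z = ((fromRows 1 Z)ᵀ : Matrix (Fin q) (Fin q ⊕ Fin r) ℝ) * P *
      (fromRows 1 Z : Matrix (Fin q ⊕ Fin r) (Fin q) ℝ) :=
  rfl

lemma dotProduct_qmi_mulVec (P : Matrix (Fin q ⊕ Fin r) (Fin q ⊕ Fin r) ℝ)
    (Z : Matrix (Fin r) (Fin q) ℝ) (x : Fin q → ℝ) :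
    x ⬝ᵥ qmi P Z *ᵥ x = Sum.elim x (Z *ᵥ x) ⬝ᵥ P *ᵥ Sum.elim x (Z *ᵥ x) := by
  rw [qmi_def, dotProduct_transpose_mul_mul_mulVec, fromRows_mulVec, one_mulVec]

lemma sumElim_dotProduct_mulVec_nonneg_of_mem_ZrSet {P : Matrix (Fin q ⊕ Fin r) (Fin q ⊕ Fin r) ℝ}
    {Z : Matrix (Fin r) (Fin q) ℝ} (hZ : Z ∈ ZrSet P) (x : Fin q → ℝ) :
    0 ≤ Sum.elim x (Z *ᵥ x) ⬝ᵥ P *ᵥ Sum.elim x (Z *ᵥ x) := by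
  simpa [← dotProduct_qmi_mulVec] using hZ.dotProduct_mulVec_nonneg x

lemma mem_ZrSet_of_forall_nonneg {P : Matrix (Fin q ⊕ Fin r) (Fin q ⊕ Fin r) ℝ} (hP : P.IsSymm)
    {Z : Matrix (Fin r) (Fin q) ℝ} (h : ∀ x, 0 ≤ Sum.elim x (Z *ᵥ x) ⬝ᵥ P *ᵥ Sum.elim x (Z *ᵥ x)) :
    Z ∈ ZrSet P := by
  have hsymm : (qmi P Z).IsHermitian := by
    rw [IsHermitian, conjTranspose_eq_transpose_of_trivial, qmi_def, transpose_mul, transpose_mul,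
      transpose_transpose, hP.eq, Matrix.mul_assoc]
  exact .of_dotProduct_mulVec_nonneg hsymm fun x => by simpa [dotProduct_qmi_mulVec] using h x

lemma ZrSet_subset_of_posSemidef_sub {M N : Matrix (Fin q ⊕ Fin r) (Fin q ⊕ Fin r) ℝ} {α : ℝ}
    (hα : 0 ≤ α) (hMN : (M - α • N).PosSemidef) : ZrSet N ⊆ ZrSet M := by
  intro Z hZ
  have hqmi : qmi M Z = qmi (M - α • N) Z + α • qmi N Z := by
    simp only [qmi_def, Matrix.mul_sub, Matrix.sub_mul, Matrix.mul_smul, Matrix.smul_mul,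
      sub_add_cancel]
  have hMN' := hMN.conjTranspose_mul_mul_same (fromRows 1 Z)
  rw [conjTranspose_eq_transpose_of_trivial] at hMN'
  change (qmi M Z).PosSemidef
  exact hqmi ▸ hMN'.add (PosSemidef.smul hZ hα)

/-- The center `-Π₂₂^† Π₂₁` of the solution set `Z_r(Π)`. -/
noncomputable def qmiCenter (N : Matrix (Fin q ⊕ Fin r) (Fin q ⊕ Fin r) ℝ) :
    Matrix (Fin r) (Fin q) ℝ :=
  -(pinv N.toBlocks₂₂ * N.toBlocks₂₁)

variable {N : Matrix (Fin q ⊕ Fin r) (Fin q ⊕ Fin r) ℝ} (hN : N.IsSymm)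
  (hker : ∀ x, N.toBlocks₂₂ *ᵥ x = 0 → N.toBlocks₁₂ *ᵥ x = 0)
include hN hker

lemma fromBlocks_schurC_factorization :
    (fromBlocks 1 0 (-qmiCenter N) 1)ᵀ * fromBlocks (schurC N) 0 0 N.toBlocks₂₂ *
      fromBlocks 1 0 (-qmiCenter N) 1 = N := by
  obtain ⟨-, h₁₂, h₂₁, h₂₂⟩ := isSymm_fromBlocks_iff.mp (N.fromBlocks_toBlocks.symm ▸ hN)
  have hD : N.toBlocks₂₂ * pinv N.toBlocks₂₂ * N.toBlocks₂₁ = N.toBlocks₂₁ :=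
    (isPseudoinverse_pinv h₂₂).mul_mul_cancel h₂₂ fun x hx => h₂₁ ▸ hker x hx
  have hDt : (pinv N.toBlocks₂₂ * N.toBlocks₂₁)ᵀ * N.toBlocks₂₂ = N.toBlocks₁₂ := by
    calc (pinv N.toBlocks₂₂ * N.toBlocks₂₁)ᵀ * N.toBlocks₂₂
        = (N.toBlocks₂₂ * (pinv N.toBlocks₂₂ * N.toBlocks₂₁))ᵀ := by
          rw [transpose_mul N.toBlocks₂₂, h₂₂.eq]
      _ = N.toBlocks₁₂ := by rw [← Matrix.mul_assoc, hD, h₂₁]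
  rw [fromBlocks_transpose, fromBlocks_multiply, fromBlocks_multiply]
  conv_rhs => rw [← N.fromBlocks_toBlocks]
  simp only [qmiCenter, schurC, neg_neg, transpose_one, transpose_zero]
  simp only [Matrix.one_mul, Matrix.mul_one, Matrix.zero_mul, Matrix.mul_zero, add_zero, zero_add]
  rw [hDt, ← Matrix.mul_assoc, sub_add_cancel, ← Matrix.mul_assoc, hD]

lemma sumElim_dotProduct_mulVec_sumElim_eq_schurC (x : Fin q → ℝ) (z : Fin r → ℝ) :
    Sum.elim x z ⬝ᵥ N *ᵥ Sum.elim x z = x ⬝ᵥ schurC N *ᵥ x +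
      (z - qmiCenter N *ᵥ x) ⬝ᵥ N.toBlocks₂₂ *ᵥ (z - qmiCenter N *ᵥ x) := by
  conv_lhs => rw [← fromBlocks_schurC_factorization hN hker]
  rw [dotProduct_transpose_mul_mul_mulVec, fromBlocks_mulVec, fromBlocks_mulVec]
  simp [sumElim_dotProduct_sumElim, neg_mulVec, sub_eq_add_neg, add_comm]

end Blocks

section SLemma

variable {q r : ℕ} {M N : Matrix (Fin q ⊕ Fin r) (Fin q ⊕ Fin r) ℝ}

lemma exists_mem_ZrSet_mulVec_eq (hN : memPi N) {x : Fin q → ℝ} (hx : x ≠ 0) {z : Fin r → ℝ}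
    (hxz : 0 ≤ Sum.elim x z ⬝ᵥ N *ᵥ Sum.elim x z) : ∃ Z ∈ ZrSet N, Z *ᵥ x = z := by
  obtain ⟨hNs, hD, hS, hker⟩ := hN
  have hid := sumElim_dotProduct_mulVec_sumElim_eq_schurC hNs hker
  set w := z - qmiCenter N *ᵥ x
  have hw : 0 ≤ -(w ⬝ᵥ N.toBlocks₂₂ *ᵥ w) := by
    simpa [neg_mulVec] using hD.dotProduct_mulVec_nonneg w
  obtain ⟨s, hsx, hs⟩ := hS.exists_dotProduct_eq_one_and_le hx hw (by rw [hid] at hxz; linarith)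
  have hZ : ∀ u, (qmiCenter N + vecMulVec w s) *ᵥ u = qmiCenter N *ᵥ u + (s ⬝ᵥ u) • w := fun u => by
    rw [add_mulVec, vecMulVec_mulVec, op_smul_eq_smul]
  refine ⟨qmiCenter N + vecMulVec w s, mem_ZrSet_of_forall_nonneg hNs fun u => ?_, ?_⟩
  · rw [hid, hZ, add_sub_cancel_left, mulVec_smul, smul_dotProduct, dotProduct_smul, smul_eq_mul,
      smul_eq_mul]
    nlinarith [hs u]
  · rw [hZ, hsx, one_smul, add_sub_cancel]

lemma nonneg_of_continuous_of_forall_ne_zero {f : ℝ → ℝ} (hf : Continuous f)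
    (h : ∀ t ≠ 0, 0 ≤ f t) : 0 ≤ f 0 := by
  have : closure ({0}ᶜ : Set ℝ) ⊆ {t | 0 ≤ f t} :=
    (isClosed_le continuous_const hf).closure_subset_iff.mpr h
  exact this (by simp)

lemma comp_inl_ne_zero_of_dotProduct_mulVec_pos (hN : memPi N) {ξ : Fin q ⊕ Fin r → ℝ}
    (hξ : 0 < ξ ⬝ᵥ N *ᵥ ξ) : ξ ∘ Sum.inl ≠ 0 := by
  intro h0
  rw [← Sum.elim_comp_inl_inr ξ, sumElim_dotProduct_mulVec_sumElim_eq_schurC hN.1 hN.2.2.2, h0]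
    at hξ
  have := hN.2.1.dotProduct_mulVec_nonneg (ξ ∘ Sum.inr)
  simp only [mulVec_zero, dotProduct_zero, sub_zero, zero_add, star_trivial, neg_mulVec,
    dotProduct_neg, Left.nonneg_neg_iff] at hξ this
  linarith

theorem dotProduct_mulVec_nonneg_of_ZrSet_subset (hN : memPi N) (hsub : ZrSet N ⊆ ZrSet M)
    (hslater : ∃ ξ, 0 < ξ ⬝ᵥ N *ᵥ ξ) {ξ : Fin q ⊕ Fin r → ℝ} (hξ : 0 ≤ ξ ⬝ᵥ N *ᵥ ξ) :
    0 ≤ ξ ⬝ᵥ M *ᵥ ξ := by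
  have hid := sumElim_dotProduct_mulVec_sumElim_eq_schurC hN.1 hN.2.2.2
  have key : ∀ x z, x ≠ 0 → 0 ≤ Sum.elim x z ⬝ᵥ N *ᵥ Sum.elim x z →
      0 ≤ Sum.elim x z ⬝ᵥ M *ᵥ Sum.elim x z := fun x z hx hxz => by
    obtain ⟨Z, hZ, rfl⟩ := exists_mem_ZrSet_mulVec_eq hN hx hxz
    exact sumElim_dotProduct_mulVec_nonneg_of_mem_ZrSet (hsub hZ) x
  by_cases hx : ξ ∘ Sum.inl = 0
  swap
  · rw [← Sum.elim_comp_inl_inr ξ] at hξ ⊢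
    exact key _ _ hx hξ
  have hz : 0 ≤ (ξ ∘ Sum.inr) ⬝ᵥ N.toBlocks₂₂ *ᵥ (ξ ∘ Sum.inr) := by
    rw [← Sum.elim_comp_inl_inr ξ, hid, hx] at hξ
    simpa using hξ
  obtain ⟨ξ₀, hξ₀⟩ := hslater
  set x₀ := ξ₀ ∘ Sum.inl
  have hx₀ : x₀ ≠ 0 := comp_inl_ne_zero_of_dotProduct_mulVec_pos hN hξ₀
  -- `ξ` is a limit of points with nonzero first component at which `N` is still nonnegative
  set η := Sum.elim x₀ (qmiCenter N *ᵥ x₀)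
  refine (nonneg_of_continuous_of_forall_ne_zero (f := fun t => (ξ + t • η) ⬝ᵥ M *ᵥ (ξ + t • η))
    (by fun_prop) fun t ht => ?_).trans_eq (by simp)
  have hpath : ξ + t • η = Sum.elim (t • x₀) (ξ ∘ Sum.inr + t • qmiCenter N *ᵥ x₀) := by
    ext (i | i)
    · simpa [η] using congrFun hx i
    · simp [η]
  simp only [hpath]
  refine key _ _ (smul_ne_zero ht hx₀) ?_
  rw [hid, mulVec_smul (qmiCenter N), add_sub_cancel_right]
  exact add_nonneg (by simpa using hN.2.2.1.dotProduct_mulVec_nonneg (t • x₀)) hz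

end SLemma

theorem stmt_13_general {q r : ℕ} (M N : Matrix (Fin q ⊕ Fin r) (Fin q ⊕ Fin r) ℝ)
    (hM : M.IsSymm) :
    ((∃ α : ℝ, 0 ≤ α ∧ (M - α • N).PosSemidef) → ZrSet N ⊆ ZrSet M) ∧
    ((memPi N ∧ ∃ μ : ℝ, 0 < μ ∧ Module.End.HasEigenvalue (Matrix.mulVecLin N) μ) →
      (ZrSet N ⊆ ZrSet M ↔ ∃ α : ℝ, 0 ≤ α ∧ (M - α • N).PosSemidef)) := by
  have hsuff : (∃ α : ℝ, 0 ≤ α ∧ (M - α • N).PosSemidef) → ZrSet N ⊆ ZrSet M :=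
    fun ⟨_, hα, hMN⟩ => ZrSet_subset_of_posSemidef_sub hα hMN
  refine ⟨hsuff, fun ⟨hN, μ, hμ, hμN⟩ => ⟨fun hsub => ?_, hsuff⟩⟩
  have hslater := exists_dotProduct_mulVec_pos_of_hasEigenvalue hμ hμN
  obtain ⟨α, hα, hle⟩ := QuadraticMap.s_lemma N.toQuadraticForm' M.toQuadraticForm'
    (fun ξ => by simpa only [toQuadraticForm'_apply] using
      dotProduct_mulVec_nonneg_of_ZrSet_subset hN hsub hslater)
    (by simpa only [toQuadraticForm'_apply] using hslater)
  refine ⟨α, hα, .of_dotProduct_mulVec_nonneg ?_ fun ξ => ?_⟩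
  · rw [IsHermitian, conjTranspose_eq_transpose_of_trivial, transpose_sub, transpose_smul, hM.eq,
      hN.1.eq]
  · simpa [sub_mulVec, smul_mulVec, toQuadraticForm'_apply] using hle ξ

/-- Matrix S-lemma: If `M − αN ⪰ 0` for some `α ≥ 0`, then
`Z_r(N) ⊆ Z_r(M)`. Conversely, if moreover `N ∈ Π_{q,r}` and `N` has at least
one positive eigenvalue, then `Z_r(N) ⊆ Z_r(M)` iff such an `α ≥ 0` exists. -/
theorem stmt_13 {q r : ℕ} (M N : Matrix (Fin q ⊕ Fin r) (Fin q ⊕ Fin r) ℝ)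
    (hM : M.IsSymm) (hN : N.IsSymm) :
    ((∃ α : ℝ, 0 ≤ α ∧ (M - α • N).PosSemidef) → ZrSet N ⊆ ZrSet M) ∧
    ((memPi N ∧ ∃ μ : ℝ, 0 < μ ∧ Module.End.HasEigenvalue (Matrix.mulVecLin N) μ) →
      (ZrSet N ⊆ ZrSet M ↔ ∃ α : ℝ, 0 ≤ α ∧ (M - α • N).PosSemidef)) :=
  stmt_13_general M N hM
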